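/- In the four-agent example economy with preference profile ≻'_I, every individually rational allocation p satisfying equal-endowment no envy satisfies p_{1,o_2} ≤ 1/2, p_{1,o_4} ≤ 1/4, and p_{3,o_1} ≤ 1/4, and is therefore strongly blocked by the coalition {1,3} via the exchange in which agent 1 receives (0, 1/2, 0, 1/2) and agent 3 receives (1/2, 0, 1/2, 0). -/

import Mathlib

open Finset

open Classical in
/-- The total amount that assignment `x` allocates to objects weakly preferred
(under strict preference `pr`) to object `o`. -/
noncomputable def upperSum {n : ℕ} (pr : Fin n → Fin n → Prop) (x : Fin n → ℝ) (o : Fin n) : ℝ :=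
  ∑ o' ∈ Finset.univ, if pr o' o ∨ o' = o then x o' else 0

/-- `p` weakly (first-order) stochastically dominates `q` with respect to `pr`. -/
def SdDom {n : ℕ} (pr : Fin n → Fin n → Prop) (p q : Fin n → ℝ) : Prop :=
  ∀ o, upperSum pr q o ≤ upperSum pr p o

/-- `p` strictly (first-order) stochastically dominates `q` with respect to `pr`. -/
def SdStrict {n : ℕ} (pr : Fin n → Fin n → Prop) (p q : Fin n → ℝ) : Prop :=
  SdDom pr p q ∧ ∃ o, upperSum pr q o < upperSum pr p o

/-- A housing market economy with fractional endowments: `n` agents, `n` objects,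
each agent has a strict (linear order) preference over objects and the endowment
matrix is doubly stochastic. -/
structure Economy (n : ℕ) where
  pref : Fin n → Fin n → Fin n → Prop
  pref_irrefl : ∀ i o, ¬ pref i o o
  pref_trans : ∀ i o₁ o₂ o₃, pref i o₁ o₂ → pref i o₂ o₃ → pref i o₁ o₃
  pref_total : ∀ i o o', o ≠ o' → pref i o o' ∨ pref i o' o
  endow : Fin n → Fin n → ℝ
  endow_nonneg : ∀ i o, 0 ≤ endow i o
  endow_row : ∀ i, ∑ o, endow i o = 1
  endow_col : ∀ o, ∑ i, endow i o = 1

/-- An allocation is a doubly stochastic matrix. -/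
def IsAllocation {n : ℕ} (p : Fin n → Fin n → ℝ) : Prop :=
  (∀ i o, 0 ≤ p i o ∧ p i o ≤ 1) ∧ (∀ i, ∑ o, p i o = 1) ∧ (∀ o, ∑ i, p i o = 1)

/-- Individual rationality. -/
def IR {n : ℕ} (E : Economy n) (p : Fin n → Fin n → ℝ) : Prop :=
  ∀ i, SdDom (E.pref i) (p i) (E.endow i)

/-- Coalition `I'` weakly blocks allocation `p` via allocation `p'`. -/
def WeaklyBlocks {n : ℕ} (E : Economy n) (I' : Finset (Fin n))
    (p p' : Fin n → Fin n → ℝ) : Prop :=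
  (∀ o, ∑ i ∈ I', p' i o = ∑ i ∈ I', E.endow i o) ∧
  (∀ i ∈ I', SdDom (E.pref i) (p' i) (p i)) ∧
  (∃ j ∈ I', SdStrict (E.pref j) (p' j) (p j))

/-- Coalition `I'` strongly blocks allocation `p` via allocation `p'`. -/
def StronglyBlocks {n : ℕ} (E : Economy n) (I' : Finset (Fin n))
    (p p' : Fin n → Fin n → ℝ) : Prop :=
  (∀ o, ∑ i ∈ I', p' i o = ∑ i ∈ I', E.endow i o) ∧
  (∀ i ∈ I', SdStrict (E.pref i) (p' i) (p i))

/-- The strong core: IR allocations not weakly blocked by any non-singleton coalition. -/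
def InStrongCore {n : ℕ} (E : Economy n) (p : Fin n → Fin n → ℝ) : Prop :=
  IsAllocation p ∧ IR E p ∧
    ¬ ∃ (I' : Finset (Fin n)) (p' : Fin n → Fin n → ℝ),
        1 < I'.card ∧ IsAllocation p' ∧ WeaklyBlocks E I' p p'

/-- The weak core: IR allocations not strongly blocked by any non-singleton coalition. -/
def InWeakCore {n : ℕ} (E : Economy n) (p : Fin n → Fin n → ℝ) : Prop :=
  IsAllocation p ∧ IR E p ∧
    ¬ ∃ (I' : Finset (Fin n)) (p' : Fin n → Fin n → ℝ),
        1 < I'.card ∧ IsAllocation p' ∧ StronglyBlocks E I' p p'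

/-- Equal treatment of equals. -/
def ETE {n : ℕ} (E : Economy n) (p : Fin n → Fin n → ℝ) : Prop :=
  ∀ i j, E.endow i = E.endow j → E.pref i = E.pref j → p i = p j

/-- Equal-endowment no envy. -/
def EENE {n : ℕ} (E : Economy n) (p : Fin n → Fin n → ℝ) : Prop :=
  ∀ i j, E.endow i = E.endow j →
    SdDom (E.pref i) (p i) (p j) ∧ SdDom (E.pref j) (p j) (p i)

/-- Endowments of the four-agent example economy:
agents 1 and 2 each own 1/2 of o1 and 1/2 of o3;
agents 3 and 4 each own 1/2 of o2 and 1/2 of o4. -/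
noncomputable def endowEx : Fin 4 → Fin 4 → ℝ :=
  ![![1/2, 0, 1/2, 0], ![1/2, 0, 1/2, 0], ![0, 1/2, 0, 1/2], ![0, 1/2, 0, 1/2]]

/-- Rankings encoding the preference profile ≻'_I (lower rank = more preferred):
agent 1: o2 ≻ o1 ≻ o4 ≻ o3; agent 2: o1 ≻ o2 ≻ o4 ≻ o3;
agent 3: o1 ≻ o2 ≻ o3 ≻ o4; agent 4: o1 ≻ o2 ≻ o4 ≻ o3. -/
def rankB : Fin 4 → Fin 4 → ℕ :=
  ![![1, 0, 3, 2], ![0, 1, 3, 2], ![0, 1, 2, 3], ![0, 1, 3, 2]]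

/-- The four-agent example economy with preference profile ≻'_I. -/
noncomputable def economyB : Economy 4 where
  pref := fun i o o' => rankB i o < rankB i o'
  pref_irrefl := fun _ _ => lt_irrefl _
  pref_trans := fun _ _ _ _ => Nat.lt_trans
  pref_total := by decide
  endow := endowEx
  endow_nonneg := by
    intro i o; fin_cases i <;> fin_cases o <;>
      norm_num [endowEx, Matrix.cons_val_zero, Matrix.cons_val_one, Matrix.head_cons,
        Matrix.cons_val_succ, Matrix.vecHead, Matrix.vecTail]
  endow_row := by
    intro i; fin_cases i <;>
      norm_num [endowEx, Fin.sum_univ_succ, Matrix.cons_val_zero, Matrix.cons_val_one,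
        Matrix.head_cons, Matrix.cons_val_succ, Matrix.vecHead, Matrix.vecTail]
  endow_col := by
    intro o; fin_cases o <;>
      norm_num [endowEx, Fin.sum_univ_succ, Matrix.cons_val_zero, Matrix.cons_val_one,
        Matrix.head_cons, Matrix.cons_val_succ, Matrix.vecHead, Matrix.vecTail]

lemma economyB_pref : economyB.pref = fun i o o' => rankB i o < rankB i o' := rfl
lemma economyB_endow : economyB.endow = endowEx := rfl

lemma cond_iff : ∀ i o o' : Fin 4, (rankB i o' < rankB i o ∨ o' = o) ↔ rankB i o' ≤ rankB i o := by
  decide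

lemma us (i : Fin 4) (x : Fin 4 → ℝ) (o : Fin 4) :
    upperSum (economyB.pref i) x o =
      ∑ o', if rankB i o' ≤ rankB i o then x o' else 0 := by
  unfold upperSum
  simp only [economyB_pref]
  refine Finset.sum_congr rfl fun o' _ => ?_
  by_cases h : rankB i o' ≤ rankB i o
  · exact (if_pos ((cond_iff i o o').mpr h)).trans (if_pos h).symm
  · exact (if_neg (fun hc => h ((cond_iff i o o').mp hc))).trans (if_neg h).symm

/-- in the example economy with profile ≻'_I, every IR allocation satisfying
EENE has p₁,o₂ ≤ 1/2, p₁,o₄ ≤ 1/4, p₃,o₁ ≤ 1/4, and is strongly blocked by {1,3} via the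
exchange where agent 1 gets (0,1/2,0,1/2) and agent 3 gets (1/2,0,1/2,0). -/
theorem eene_strongly_blocked_exampleB (p : Fin 4 → Fin 4 → ℝ)
    (hp : IsAllocation p) (hIR : IR economyB p) (hEENE : EENE economyB p) :
    (p 0 1 ≤ 1 / 2 ∧ p 0 3 ≤ 1 / 4 ∧ p 2 0 ≤ 1 / 4) ∧
    ∃ q : Fin 4 → Fin 4 → ℝ, IsAllocation q ∧
      q 0 = ![0, 1 / 2, 0, 1 / 2] ∧ q 2 = ![1 / 2, 0, 1 / 2, 0] ∧
      StronglyBlocks economyB {0, 2} p q := by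
  obtain ⟨hnn, hrow, hcol⟩ := hp
  have hEw : economyB.endow 0 = economyB.endow 1 := rfl
  have hEw2 : economyB.endow 2 = economyB.endow 3 := rfl
  have hE01 := hEENE 0 1 hEw
  have hE23 := hEENE 2 3 hEw2
  -- IR facts
  have hA := hIR 0 0
  have hB := hIR 1 0
  have hC := hIR 2 1
  have hD := hIR 2 2
  have hE := hIR 3 1
  have hF := hIR 3 3
  simp only [us, Fin.sum_univ_four, economyB_endow] at hA hB hC hD hE hF
  simp (config := { decide := true }) only [endowEx, Matrix.cons_val_zero, Matrix.cons_val_one,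
    Matrix.head_cons, Matrix.cons_val_two, Matrix.tail_cons, Matrix.cons_val_three,
    if_true, if_false] at hA hB hC hD hE hF
  norm_num at hA hB hC hD hE hF
  -- EENE facts
  have e1 := hE01.1 1
  have e2 := hE01.1 0
  have e3 := hE01.1 3
  have e4 := hE01.2 0
  have e5 := hE01.2 1
  have e6 := hE01.2 3
  have f1 := hE23.1 0
  have f2 := hE23.1 1
  have f3 := hE23.1 2
  have f4 := hE23.2 0
  have f5 := hE23.2 1
  have f6 := hE23.2 3
  simp only [us, Fin.sum_univ_four] at e1 e2 e3 e4 e5 e6 f1 f2 f3 f4 f5 f6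
  simp (config := { decide := true }) only [if_true, if_false]
    at e1 e2 e3 e4 e5 e6 f1 f2 f3 f4 f5 f6
  norm_num at e1 e2 e3 e4 e5 e6 f1 f2 f3 f4 f5 f6
  -- allocation facts
  have r0 := hrow 0; have r1 := hrow 1; have r2 := hrow 2; have r3 := hrow 3
  have c0 := hcol 0; have c1 := hcol 1; have c2 := hcol 2; have c3 := hcol 3
  simp only [Fin.sum_univ_four] at r0 r1 r2 r3 c0 c1 c2 c3
  have n32 := (hnn 3 2).1
  have n00 := (hnn 0 0).1
  have n01 := (hnn 0 1).1
  have n03 := (hnn 0 3).1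
  have n11 := (hnn 1 1).1
  have n13 := (hnn 1 3).1
  have n20 := (hnn 2 0).1
  have n23 := (hnn 2 3).1
  have n22 := (hnn 2 2).1
  refine ⟨⟨by linarith, by linarith, by linarith⟩, ?_⟩
  refine ⟨![![0,1/2,0,1/2], ![1/2,0,1/2,0], ![1/2,0,1/2,0], ![0,1/2,0,1/2]], ?_, ?_, ?_, ?_, ?_⟩
  · refine ⟨fun i o => ?_, fun i => ?_, fun o => ?_⟩
    · fin_cases i <;> fin_cases o <;>
        norm_num [Matrix.cons_val_zero, Matrix.cons_val_one, Matrix.head_cons,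
          Matrix.cons_val_two, Matrix.tail_cons, Matrix.cons_val_three]
    · fin_cases i <;>
        norm_num [Fin.sum_univ_four, Matrix.cons_val_zero, Matrix.cons_val_one, Matrix.head_cons,
          Matrix.cons_val_two, Matrix.tail_cons, Matrix.cons_val_three]
    · fin_cases o <;>
        norm_num [Fin.sum_univ_four, Matrix.cons_val_zero, Matrix.cons_val_one, Matrix.head_cons,
          Matrix.cons_val_two, Matrix.tail_cons, Matrix.cons_val_three]
  · norm_num
  · norm_num [Matrix.cons_val_two, Matrix.tail_cons, Matrix.head_cons]
  · intro o
    rw [Finset.sum_pair (by decide), Finset.sum_pair (by decide), economyB_endow]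
    fin_cases o <;>
      norm_num [endowEx, Matrix.cons_val_zero, Matrix.cons_val_one, Matrix.head_cons,
        Matrix.cons_val_two, Matrix.tail_cons, Matrix.cons_val_three]
  · intro i hi
    fin_cases hi
    · constructor
      · intro o
        rw [us, us]
        fin_cases o <;>
          (simp (config := { decide := true }) only [Fin.sum_univ_four, Matrix.cons_val_zero,
            Matrix.cons_val_one, Matrix.head_cons, Matrix.cons_val_two, Matrix.tail_cons,
            Matrix.cons_val_three, if_true, if_false] <;> norm_num <;> linarith)
      · refine ⟨3, ?_⟩
        rw [us, us]
        simp (config := { decide := true }) only [Fin.sum_univ_four, Matrix.cons_val_zero,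
          Matrix.cons_val_one, Matrix.head_cons, Matrix.cons_val_two, Matrix.tail_cons,
          Matrix.cons_val_three, if_true, if_false]
        norm_num
        linarith
    · constructor
      · intro o
        rw [us, us]
        fin_cases o <;>
          (simp (config := { decide := true }) only [Fin.sum_univ_four, Matrix.cons_val_zero,
            Matrix.cons_val_one, Matrix.head_cons, Matrix.cons_val_two, Matrix.tail_cons,
            Matrix.cons_val_three, if_true, if_false] <;> norm_num <;> linarith)
      · refine ⟨0, ?_⟩
        rw [us, us]
        simp (config := { decide := true }) only [Fin.sum_univ_four, Matrix.cons_val_zero,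
          Matrix.cons_val_one, Matrix.head_cons, Matrix.cons_val_two, Matrix.tail_cons,
          Matrix.cons_val_three, if_true, if_false]
        norm_num
        linarith
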